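/- Let h₁, …, hₙ > 0, b > 0, ρ ∈ ℝ, and let S = (s_{ji}), W = (w_{ji}) be n×n matrices with w_{jj} = 0. Define the matrix J with entries J_{jj} = 1/√(h_j) and J_{ij} = -(b y_j / (2 y_i h_j^{3/2})) ρ s_{ji} w_{ji} for i ≠ j, where y₁, …, yₙ ≠ 0. Then ln|det J| = ln|det( diag(2h₁/b, …, 2hₙ/b) - ρ (Sᵀ ∘ Wᵀ) )| + ∑_{i=1}^n ln( b / (2 h_i^{3/2}) ), where ∘ denotes the Hadamard (entrywise) product, provided both determinants are nonzero. -/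

import Mathlib

/-!
Writing `c_j = b / (2 h_j^{3/2})` and `M = diag(2h/b) - ρ (Sᵀ ∘ Wᵀ)`, the Jacobian factors as
`J = diag(y)⁻¹ M diag(y) diag(c)`: the entry `M_ij y_j c_j / y_i` is `J_ij`, and on the diagonal
`(2h_j/b) c_j = h_j / h_j^{3/2} = 1/√h_j` because `w_jj = 0`. The conjugation by `diag(y)` does
not change the determinant, so `det J = det M ∏ c_j` with every `c_j > 0`.
-/

open Matrix

theorem Matrix.det_diagonal_inv_mul_mul_diagonal_mul {ι K : Type*} [Fintype ι] [DecidableEq ι]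
    [Field K] (A : Matrix ι ι K) (d c : ι → K) (hd : ∀ i, d i ≠ 0) :
    (diagonal d⁻¹ * A * diagonal (d * c)).det = A.det * ∏ i, c i := by
  have hd_cancel : (∏ i, (d i)⁻¹) * ∏ i, d i = 1 := by
    rw [← Finset.prod_mul_distrib]
    exact Finset.prod_eq_one fun i _ => inv_mul_cancel₀ (hd i)
  simp only [det_mul, det_diagonal, Pi.inv_apply, Pi.mul_apply, Finset.prod_mul_distrib]
  linear_combination (A.det * ∏ i, c i) * hd_cancel

theorem Real.rpow_three_halves {x : ℝ} (hx : 0 ≤ x) : x ^ ((3 : ℝ) / 2) = x * √x := by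
  rw [Real.sqrt_eq_rpow, show (3 : ℝ) / 2 = 1 + 1 / 2 by norm_num, Real.rpow_add' hx (by norm_num),
    Real.rpow_one]

theorem Real.log_abs_mul_prod {ι : Type*} [Fintype ι] {x : ℝ} {c : ι → ℝ} (hx : x ≠ 0)
    (hc : ∀ i, 0 < c i) : Real.log |x * ∏ i, c i| = Real.log |x| + ∑ i, Real.log (c i) := by
  have hprod : 0 < ∏ i, c i := Finset.prod_pos fun i _ => hc i
  rw [abs_mul, abs_of_pos hprod, Real.log_mul (abs_ne_zero.2 hx) hprod.ne',
    Real.log_prod fun i _ => (hc i).ne']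

theorem espARCH_jacobian_eq {n : ℕ} (h y : Fin n → ℝ) (ρ b : ℝ) (S W : Matrix (Fin n) (Fin n) ℝ)
    (hh : ∀ i, 0 < h i) (hb : 0 < b) (hy : ∀ i, y i ≠ 0) (hWdiag : ∀ j, W j j = 0) :
    (Matrix.of fun i j =>
      if i = j then 1 / Real.sqrt (h j)
      else -(b * y j / (2 * y i * (h j) ^ ((3 : ℝ) / 2))) * ρ * S j i * W j i) =
      diagonal y⁻¹ * (diagonal (fun i => 2 * h i / b) - ρ • hadamard Sᵀ Wᵀ) *
        diagonal (y * fun j => b / (2 * h j ^ ((3 : ℝ) / 2))) := by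
  ext i j
  simp only [of_apply, mul_diagonal, diagonal_mul, Pi.inv_apply, Pi.mul_apply, Matrix.sub_apply,
    Matrix.smul_apply, hadamard_apply, transpose_apply, smul_eq_mul]
  have hsqrt : 0 < √(h j) := Real.sqrt_pos.2 (hh j)
  split_ifs with hij
  · subst hij
    rw [diagonal_apply_eq, hWdiag, mul_zero, mul_zero, sub_zero, Real.rpow_three_halves (hh i).le]
    field_simp [hy i, hb.ne', (hh i).ne', hsqrt.ne']
  · rw [diagonal_apply_ne _ hij]
    field_simp [hy i, hy j]
    ring

theorem stmt9_general {n : ℕ} (h y : Fin n → ℝ) (ρ b : ℝ)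
    (S W : Matrix (Fin n) (Fin n) ℝ)
    (hh : ∀ i, 0 < h i) (hb : 0 < b) (hy : ∀ i, y i ≠ 0)
    (hWdiag : ∀ j, W j j = 0)
    (J : Matrix (Fin n) (Fin n) ℝ)
    (hJ : J = Matrix.of fun i j =>
      if i = j then 1 / Real.sqrt (h j)
      else -(b * y j / (2 * y i * (h j) ^ ((3 : ℝ) / 2))) * ρ * S j i * W j i)
    (hMdet :
      (Matrix.diagonal (fun i => 2 * h i / b) - ρ • Matrix.hadamard Sᵀ Wᵀ).det ≠ 0) :
    Real.log |J.det| =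
      Real.log
          |(Matrix.diagonal (fun i => 2 * h i / b) - ρ • Matrix.hadamard Sᵀ Wᵀ).det| +
        ∑ i, Real.log (b / (2 * (h i) ^ ((3 : ℝ) / 2))) := by
  rw [hJ, espARCH_jacobian_eq h y ρ b S W hh hb hy hWdiag,
    det_diagonal_inv_mul_mul_diagonal_mul _ _ _ hy]
  exact Real.log_abs_mul_prod hMdet fun i =>
    div_pos hb (mul_pos two_pos (Real.rpow_pos_of_pos (hh i) _))

theorem stmt9 {n : ℕ} (h y : Fin n → ℝ) (ρ b : ℝ)
    (S W : Matrix (Fin n) (Fin n) ℝ)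
    (hh : ∀ i, 0 < h i) (hb : 0 < b) (hy : ∀ i, y i ≠ 0)
    (hWdiag : ∀ j, W j j = 0)
    (J : Matrix (Fin n) (Fin n) ℝ)
    (hJ : J = Matrix.of fun i j =>
      if i = j then 1 / Real.sqrt (h j)
      else -(b * y j / (2 * y i * (h j) ^ ((3 : ℝ) / 2))) * ρ * S j i * W j i)
    (hJdet : J.det ≠ 0)
    (hMdet :
      (Matrix.diagonal (fun i => 2 * h i / b) - ρ • Matrix.hadamard Sᵀ Wᵀ).det ≠ 0) :
    Real.log |J.det| =
      Real.log
          |(Matrix.diagonal (fun i => 2 * h i / b) - ρ • Matrix.hadamard Sᵀ Wᵀ).det| +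
        ∑ i, Real.log (b / (2 * (h i) ^ ((3 : ℝ) / 2))) :=
  stmt9_general h y ρ b S W hh hb hy hWdiag J hJ hMdet
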